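/- Let A₁₁, A₁₂, B₂₂, B₁₂ be n×n Hermitian positive semidefinite complex matrices with trace 1, m₁₁ > 0 and m₁₂ ≥ 0, and set Ã = (m₁₁A₁₁ + m₁₂A₁₂)/(m₁₁+m₁₂) and B̃ = (m₁₁B₂₂ + m₁₂B₁₂)/(m₁₁+m₁₂). Then m₁₂·(‖Ã − B̃‖_F² − ‖A₁₂ − B₁₂‖_F²) ≤ 2·m₁₁. -/

import Mathlib

/-!
Write `Ã - B̃ = a • (A₁₁ - B₂₂) + b • (A₁₂ - B₁₂)` with `a = m₁₁ / (m₁₁ + m₁₂)` and `a + b = 1`.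
Convexity of `‖·‖_F²` gives `m₁₂ (‖Ã - B̃‖_F² - ‖A₁₂ - B₁₂‖_F²) ≤ m₁₂ a ‖A₁₁ - B₂₂‖_F²`, and
`m₁₂ a ≤ m₁₁`. For density matrices `‖A - B‖_F² = tr A² + tr B² - 2 Re tr (A B) ≤ 2`, because
`tr A² = ∑ λᵢ² ≤ (∑ λᵢ)² = 1` and `tr (A B) = tr (√A B √A) ≥ 0`.
-/

open Matrix ComplexOrder

/-- The squared Frobenius norm of a complex matrix. -/
noncomputable def frobSq {n : ℕ} (M : Matrix (Fin n) (Fin n) ℂ) : ℝ :=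
  ∑ i, ∑ j, ‖M i j‖ ^ 2

namespace Matrix

variable {𝕜 n : Type*} [RCLike 𝕜] [Fintype n]

theorem re_trace_mul_conjTranspose {m : Type*} [Fintype m] (M : Matrix m n 𝕜) :
    RCLike.re (M * Mᴴ).trace = ∑ i, ∑ j, ‖M i j‖ ^ 2 := by
  simp only [trace, diag_apply, mul_apply, conjTranspose_apply, map_sum, RCLike.star_def,
    RCLike.mul_conj]
  norm_cast

theorem IsHermitian.trace_mul_self [DecidableEq n] {A : Matrix n n 𝕜} (hA : A.IsHermitian) :
    (A * A).trace = ∑ i, (hA.eigenvalues i : 𝕜) ^ 2 := by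
  conv_lhs => rw [hA.spectral_theorem, ← map_mul, Unitary.conjStarAlgAut_apply, trace_mul_cycle,
    Unitary.coe_star_mul_self, one_mul, diagonal_mul_diagonal, trace_diagonal]
  simp [sq]

theorem PosSemidef.re_trace_mul_self_le {A : Matrix n n 𝕜} (hA : A.PosSemidef) :
    RCLike.re (A * A).trace ≤ RCLike.re A.trace ^ 2 := by
  classical
  rw [hA.isHermitian.trace_mul_self, hA.isHermitian.trace_eq_sum_eigenvalues]
  simp only [map_sum, ← RCLike.ofReal_pow, RCLike.ofReal_re]
  exact Finset.sum_sq_le_sq_sum_of_nonneg fun i _ => hA.eigenvalues_nonneg i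

open MatrixOrder in
theorem PosSemidef.trace_mul_nonneg {A B : Matrix n n 𝕜} (hA : A.PosSemidef) (hB : B.PosSemidef) :
    0 ≤ (A * B).trace := by
  classical
  have hsqrt := (CFC.sqrt_nonneg A).posSemidef
  rw [← CFC.sqrt_mul_sqrt_self A hA.nonneg, mul_assoc, trace_mul_comm]
  simpa only [hsqrt.isHermitian.eq] using
    (hB.conjTranspose_mul_mul_same (CFC.sqrt A)).trace_nonneg

end Matrix

theorem frobSq_eq_re_trace_mul_conjTranspose {n : ℕ} (M : Matrix (Fin n) (Fin n) ℂ) :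
    frobSq M = (M * Mᴴ).trace.re :=
  (re_trace_mul_conjTranspose M).symm

theorem frobSq_sub_le_of_posSemidef {n : ℕ} {A B : Matrix (Fin n) (Fin n) ℂ}
    (hA : A.PosSemidef) (hB : B.PosSemidef) :
    frobSq (A - B) ≤ A.trace.re ^ 2 + B.trace.re ^ 2 := by
  have hAB : 0 ≤ (A * B).trace.re := (Complex.nonneg_iff.mp (hA.trace_mul_nonneg hB)).1
  have hAA : (A * A).trace.re ≤ A.trace.re ^ 2 := hA.re_trace_mul_self_le
  have hBB : (B * B).trace.re ≤ B.trace.re ^ 2 := hB.re_trace_mul_self_le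
  rw [frobSq_eq_re_trace_mul_conjTranspose, (hA.isHermitian.sub hB.isHermitian).eq,
    show (A - B) * (A - B) = A * A + B * B - (A * B + B * A) by noncomm_ring,
    trace_sub, trace_add, trace_add, trace_mul_comm B A]
  simp only [Complex.sub_re, Complex.add_re]
  linarith

section Frobenius

attribute [local instance] Matrix.frobeniusNormedAddCommGroup Matrix.frobeniusNormedSpace

theorem frobSq_eq_norm_sq {n : ℕ} (M : Matrix (Fin n) (Fin n) ℂ) : frobSq M = ‖M‖ ^ 2 := by
  change _ = ‖WithLp.toLp 2 fun i => WithLp.toLp 2 fun j => M i j‖ ^ 2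
  simp only [PiLp.norm_sq_eq_of_L2]
  rfl

theorem frobSq_nonneg {n : ℕ} (M : Matrix (Fin n) (Fin n) ℂ) : 0 ≤ frobSq M := by
  rw [frobSq_eq_norm_sq]
  positivity

theorem convexOn_frobSq {n : ℕ} : ConvexOn ℝ Set.univ (frobSq (n := n)) := by
  rw [show frobSq = fun M : Matrix (Fin n) (Fin n) ℂ => ‖M‖ ^ 2 from funext frobSq_eq_norm_sq]
  exact convexOn_univ_norm.pow (fun _ _ => norm_nonneg _) 2

end Frobenius

theorem mixing_cost_bound_general {n : ℕ}
    (A₁₁ A₁₂ B₂₂ B₁₂ : Matrix (Fin n) (Fin n) ℂ)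
    (hA₁₁ : A₁₁.PosSemidef) (hB₂₂ : B₂₂.PosSemidef)
    (hA₁₁t : A₁₁.trace = 1) (hB₂₂t : B₂₂.trace = 1)
    (m₁₁ m₁₂ : ℝ) (hm₁₁ : 0 < m₁₁) (hm₁₂ : 0 ≤ m₁₂)
    (tA tB : Matrix (Fin n) (Fin n) ℂ)
    (htA : tA = ((m₁₁ + m₁₂)⁻¹ : ℝ) • (m₁₁ • A₁₁ + m₁₂ • A₁₂))
    (htB : tB = ((m₁₁ + m₁₂)⁻¹ : ℝ) • (m₁₁ • B₂₂ + m₁₂ • B₁₂)) :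
    m₁₂ * (frobSq (tA - tB) - frobSq (A₁₂ - B₁₂)) ≤ 2 * m₁₁ := by
  have hs : 0 < m₁₁ + m₁₂ := by linarith
  set a := m₁₁ / (m₁₁ + m₁₂)
  set b := m₁₂ / (m₁₁ + m₁₂)
  have ha : 0 ≤ a := by positivity
  have hab : a + b = 1 := by rw [← add_div, div_self hs.ne']
  have hdiff : tA - tB = a • (A₁₁ - B₂₂) + b • (A₁₂ - B₁₂) := by
    simp only [htA, htB, a, b, div_eq_inv_mul, mul_smul]
    module
  have hconv : frobSq (tA - tB) ≤ a * frobSq (A₁₁ - B₂₂) + b * frobSq (A₁₂ - B₁₂) :=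
    hdiff ▸ convexOn_frobSq.2 trivial trivial ha (by positivity) hab
  have hfar : frobSq (A₁₁ - B₂₂) ≤ 2 := by
    simpa [hA₁₁t, hB₂₂t, one_add_one_eq_two] using frobSq_sub_le_of_posSemidef hA₁₁ hB₂₂
  have hnear := frobSq_nonneg (A₁₂ - B₁₂)
  calc m₁₂ * (frobSq (tA - tB) - frobSq (A₁₂ - B₁₂))
      ≤ m₁₂ * (a * 2) := by
        gcongr
        nlinarith [mul_le_mul_of_nonneg_left hfar ha, mul_nonneg ha hnear]
    _ = 2 * m₁₁ * (m₁₂ / (m₁₁ + m₁₂)) := by ring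
    _ ≤ 2 * m₁₁ := mul_le_of_le_one_right (by positivity) (div_le_one_of_le₀ (by linarith) hs.le)

theorem mixing_cost_bound {n : ℕ}
    (A₁₁ A₁₂ B₂₂ B₁₂ : Matrix (Fin n) (Fin n) ℂ)
    (hA₁₁ : A₁₁.PosSemidef) (hA₁₂ : A₁₂.PosSemidef)
    (hB₂₂ : B₂₂.PosSemidef) (hB₁₂ : B₁₂.PosSemidef)
    (hA₁₁t : A₁₁.trace = 1) (hA₁₂t : A₁₂.trace = 1)
    (hB₂₂t : B₂₂.trace = 1) (hB₁₂t : B₁₂.trace = 1)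
    (m₁₁ m₁₂ : ℝ) (hm₁₁ : 0 < m₁₁) (hm₁₂ : 0 ≤ m₁₂)
    (tA tB : Matrix (Fin n) (Fin n) ℂ)
    (htA : tA = ((m₁₁ + m₁₂)⁻¹ : ℝ) • (m₁₁ • A₁₁ + m₁₂ • A₁₂))
    (htB : tB = ((m₁₁ + m₁₂)⁻¹ : ℝ) • (m₁₁ • B₂₂ + m₁₂ • B₁₂)) :
    m₁₂ * (frobSq (tA - tB) - frobSq (A₁₂ - B₁₂)) ≤ 2 * m₁₁ :=
  mixing_cost_bound_general A₁₁ A₁₂ B₂₂ B₁₂ hA₁₁ hB₂₂ hA₁₁t hB₂₂t m₁₁ m₁₂ hm₁₁ hm₁₂ tA tB htA htB
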